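/- At the point h₁⁰ = h₂⁰ = 0 of the parametrization (h₁⁰, h₂⁰) ↦ (x, y, z) of the Riemannian sphere of radius 2πε in the problem P_ε near the z-axis, all three 2×2 Jacobian minors ∂(x,y)/∂(h₁⁰,h₂⁰), ∂(x,z)/∂(h₁⁰,h₂⁰), ∂(y,z)/∂(h₁⁰,h₂⁰) vanish. -/

import Mathlib

open Real

/-- Parametrization `(h₁⁰, h₂⁰) ↦ (x, y, z)` of the sphere of radius `2πε` of the
Riemannian problem `P_ε` on the Heisenberg group near the z-axis: the endpoint at time
`t = 2πε` of the extremal with initial covector `(h₁⁰, h₂⁰, h₃)`,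
`h₃ = √(1 − (h₁⁰)² − (h₂⁰)²)/ε`, `τ = h₃ t`. -/
noncomputable def spherePar (ε : ℝ) (p : ℝ × ℝ) : ℝ × ℝ × ℝ :=
  let h₁ := p.1; let h₂ := p.2
  let h₃ := Real.sqrt (1 - h₁ ^ 2 - h₂ ^ 2) / ε
  let τ := h₃ * (2 * π * ε)
  ((h₁ * Real.sin τ + h₂ * (Real.cos τ - 1)) / h₃,
   (h₂ * Real.sin τ - h₁ * (Real.cos τ - 1)) / h₃,
   (1 - ε ^ 2 * h₃ ^ 2) * (τ - Real.sin τ) / (2 * h₃ ^ 2) + ε ^ 2 * τ)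

lemma aux (ε : ℝ) (hε : 0 < ε) :
    HasFDerivAt (fun p : ℝ × ℝ => (spherePar ε p).1) (0 : ℝ × ℝ →L[ℝ] ℝ) (0,0) ∧
    HasFDerivAt (fun p : ℝ × ℝ => (spherePar ε p).2.1) (0 : ℝ × ℝ →L[ℝ] ℝ) (0,0) := by
  have hsq1 : HasFDerivAt (fun p : ℝ × ℝ => p.1 ^ 2) (0 : ℝ × ℝ →L[ℝ] ℝ) (0,0) := by
    have h := HasDerivAt.comp_hasFDerivAt (𝕜 := ℝ) ((0,0) : ℝ × ℝ) (hasDerivAt_pow 2 ((0:ℝ)))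
      (hasFDerivAt_fst (p := ((0,0) : ℝ × ℝ)))
    exact h.congr_fderiv (by ext <;> simp)
  have hsq2 : HasFDerivAt (fun p : ℝ × ℝ => p.2 ^ 2) (0 : ℝ × ℝ →L[ℝ] ℝ) (0,0) := by
    have h := HasDerivAt.comp_hasFDerivAt (𝕜 := ℝ) ((0,0) : ℝ × ℝ) (hasDerivAt_pow 2 ((0:ℝ)))
      (hasFDerivAt_snd (p := ((0,0) : ℝ × ℝ)))
    exact h.congr_fderiv (by ext <;> simp)
  have hu : HasFDerivAt (fun p : ℝ × ℝ => 1 - p.1 ^ 2 - p.2 ^ 2)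
      (0 : ℝ × ℝ →L[ℝ] ℝ) (0,0) := by
    have := ((hasFDerivAt_const (1:ℝ) ((0,0):ℝ×ℝ)).sub hsq1).sub hsq2
    exact this.congr_fderiv (by simp)
  have hu0 : (1 : ℝ) - ((0:ℝ),(0:ℝ)).1 ^ 2 - ((0:ℝ),(0:ℝ)).2 ^ 2 = 1 := by norm_num
  have hs : HasFDerivAt (fun p : ℝ × ℝ => Real.sqrt (1 - p.1 ^ 2 - p.2 ^ 2))
      (0 : ℝ × ℝ →L[ℝ] ℝ) (0,0) := by
    have hd : HasDerivAt Real.sqrt (1 / (2 * Real.sqrt 1)) 1 :=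
      Real.hasDerivAt_sqrt one_ne_zero
    have h := hd.comp_hasFDerivAt_of_eq ((0,0) : ℝ × ℝ) hu (by norm_num)
    exact h.congr_fderiv (by simp)
  have hD : HasFDerivAt (fun p : ℝ × ℝ => Real.sqrt (1 - p.1 ^ 2 - p.2 ^ 2) / ε)
      (0 : ℝ × ℝ →L[ℝ] ℝ) (0,0) := by
    have heq : (fun p : ℝ × ℝ => Real.sqrt (1 - p.1 ^ 2 - p.2 ^ 2) / ε)
        = fun p : ℝ × ℝ => Real.sqrt (1 - p.1 ^ 2 - p.2 ^ 2) * ε⁻¹ := by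
      funext p; rw [div_eq_mul_inv]
    rw [heq]
    simpa using hs.mul_const ε⁻¹
  have hτ : HasFDerivAt (fun p : ℝ × ℝ =>
      Real.sqrt (1 - p.1 ^ 2 - p.2 ^ 2) / ε * (2 * π * ε))
      (0 : ℝ × ℝ →L[ℝ] ℝ) (0,0) := by
    simpa using hD.mul_const (2 * π * ε)
  have hτ0 : Real.sqrt (1 - (0:ℝ) ^ 2 - (0:ℝ) ^ 2) / ε * (2 * π * ε) = 2 * π := by
    rw [show (1 - (0:ℝ)^2 - (0:ℝ)^2) = 1 by norm_num, Real.sqrt_one]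
    field_simp
  have hsin : HasFDerivAt (fun p : ℝ × ℝ =>
      Real.sin (Real.sqrt (1 - p.1 ^ 2 - p.2 ^ 2) / ε * (2 * π * ε)))
      (0 : ℝ × ℝ →L[ℝ] ℝ) (0,0) := by
    have h := (Real.hasDerivAt_sin
        (Real.sqrt (1 - (0:ℝ) ^ 2 - (0:ℝ) ^ 2) / ε * (2 * π * ε))).comp_hasFDerivAt
      ((0,0) : ℝ × ℝ) hτ
    exact h.congr_fderiv (by simp)
  have hcos : HasFDerivAt (fun p : ℝ × ℝ =>
      Real.cos (Real.sqrt (1 - p.1 ^ 2 - p.2 ^ 2) / ε * (2 * π * ε)) - 1)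
      (0 : ℝ × ℝ →L[ℝ] ℝ) (0,0) := by
    have h := ((Real.hasDerivAt_cos
        (Real.sqrt (1 - (0:ℝ) ^ 2 - (0:ℝ) ^ 2) / ε * (2 * π * ε))).comp_hasFDerivAt
      ((0,0) : ℝ × ℝ) hτ).sub_const 1
    simpa using h
  have hsin0 : Real.sin (Real.sqrt (1 - (0:ℝ) ^ 2 - (0:ℝ) ^ 2) / ε * (2 * π * ε)) = 0 := by
    rw [hτ0]; exact Real.sin_two_pi
  have hcos0 : Real.cos (Real.sqrt (1 - (0:ℝ) ^ 2 - (0:ℝ) ^ 2) / ε * (2 * π * ε)) - 1 = 0 := by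
    rw [hτ0, Real.cos_two_pi]; ring
  have hD0 : Real.sqrt (1 - (0:ℝ) ^ 2 - (0:ℝ) ^ 2) / ε ≠ 0 := by
    rw [show (1 - (0:ℝ)^2 - (0:ℝ)^2) = 1 by norm_num, Real.sqrt_one]
    positivity
  have hinv : HasFDerivAt (fun p : ℝ × ℝ =>
      (Real.sqrt (1 - p.1 ^ 2 - p.2 ^ 2) / ε)⁻¹) (0 : ℝ × ℝ →L[ℝ] ℝ) (0,0) := by
    have h := (hasDerivAt_inv hD0).comp_hasFDerivAt ((0,0) : ℝ × ℝ) hD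
    exact h.congr_fderiv (by ext <;> simp)
  have hNx : HasFDerivAt (fun p : ℝ × ℝ =>
      p.1 * Real.sin (Real.sqrt (1 - p.1 ^ 2 - p.2 ^ 2) / ε * (2 * π * ε)) +
      p.2 * (Real.cos (Real.sqrt (1 - p.1 ^ 2 - p.2 ^ 2) / ε * (2 * π * ε)) - 1))
      (0 : ℝ × ℝ →L[ℝ] ℝ) (0,0) := by
    have := ((hasFDerivAt_fst (p := ((0,0):ℝ×ℝ))).mul hsin).add
      ((hasFDerivAt_snd (p := ((0,0):ℝ×ℝ))).mul hcos)
    refine this.congr_fderiv ?_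
    simp only [hsin0, hcos0]
    ext <;> simp
  have hNy : HasFDerivAt (fun p : ℝ × ℝ =>
      p.2 * Real.sin (Real.sqrt (1 - p.1 ^ 2 - p.2 ^ 2) / ε * (2 * π * ε)) -
      p.1 * (Real.cos (Real.sqrt (1 - p.1 ^ 2 - p.2 ^ 2) / ε * (2 * π * ε)) - 1))
      (0 : ℝ × ℝ →L[ℝ] ℝ) (0,0) := by
    have := ((hasFDerivAt_snd (p := ((0,0):ℝ×ℝ))).mul hsin).sub
      ((hasFDerivAt_fst (p := ((0,0):ℝ×ℝ))).mul hcos)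
    refine this.congr_fderiv ?_
    simp only [hsin0, hcos0]
    ext <;> simp
  constructor
  · have h := hNx.mul hinv
    have h2 : (fun p : ℝ × ℝ => (spherePar ε p).1) = fun p : ℝ × ℝ =>
        (p.1 * Real.sin (Real.sqrt (1 - p.1 ^ 2 - p.2 ^ 2) / ε * (2 * π * ε)) +
         p.2 * (Real.cos (Real.sqrt (1 - p.1 ^ 2 - p.2 ^ 2) / ε * (2 * π * ε)) - 1)) *
        (Real.sqrt (1 - p.1 ^ 2 - p.2 ^ 2) / ε)⁻¹ := by
      funext p; simp [spherePar, div_eq_mul_inv]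
    rw [h2]
    refine h.congr_fderiv ?_
    simp
  · have h := hNy.mul hinv
    have h2 : (fun p : ℝ × ℝ => (spherePar ε p).2.1) = fun p : ℝ × ℝ =>
        (p.2 * Real.sin (Real.sqrt (1 - p.1 ^ 2 - p.2 ^ 2) / ε * (2 * π * ε)) -
         p.1 * (Real.cos (Real.sqrt (1 - p.1 ^ 2 - p.2 ^ 2) / ε * (2 * π * ε)) - 1)) *
        (Real.sqrt (1 - p.1 ^ 2 - p.2 ^ 2) / ε)⁻¹ := by
      funext p; simp [spherePar, div_eq_mul_inv]
    rw [h2]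
    refine h.congr_fderiv ?_
    simp

/-- All three `2×2` minors of the Jacobian of the parametrization of the sphere
`S_ε(2πε)` vanish at `h₁⁰ = h₂⁰ = 0`. -/
theorem stmt_18 (ε : ℝ) (hε : 0 < ε) :
    (fderiv ℝ (fun p => (spherePar ε p).1) (0, 0) (1, 0) *
        fderiv ℝ (fun p => (spherePar ε p).2.1) (0, 0) (0, 1) -
      fderiv ℝ (fun p => (spherePar ε p).1) (0, 0) (0, 1) *
        fderiv ℝ (fun p => (spherePar ε p).2.1) (0, 0) (1, 0) = 0) ∧
    (fderiv ℝ (fun p => (spherePar ε p).1) (0, 0) (1, 0) *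
        fderiv ℝ (fun p => (spherePar ε p).2.2) (0, 0) (0, 1) -
      fderiv ℝ (fun p => (spherePar ε p).1) (0, 0) (0, 1) *
        fderiv ℝ (fun p => (spherePar ε p).2.2) (0, 0) (1, 0) = 0) ∧
    (fderiv ℝ (fun p => (spherePar ε p).2.1) (0, 0) (1, 0) *
        fderiv ℝ (fun p => (spherePar ε p).2.2) (0, 0) (0, 1) -
      fderiv ℝ (fun p => (spherePar ε p).2.1) (0, 0) (0, 1) *
        fderiv ℝ (fun p => (spherePar ε p).2.2) (0, 0) (1, 0) = 0) := by
  obtain ⟨hx, hy⟩ := aux ε hε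
  rw [hx.fderiv, hy.fderiv]
  simp
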